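/- Let A be a finite dimensional symmetric algebra over an algebraically closed field of characteristic p > 0. Then the unit element 1 of A is not contained in the first generalized Reynolds ideal T_1(A)^⊥, provided soc(A) ≠ 0 and soc(A) ⊆ T_1(A); in particular T_1(A)^⊥ is a proper ideal of Z(A). -/

import Mathlib

variable (K A : Type*) [Field K] [Ring A] [Algebra K A]

/-- The socle of `A` (as a left module over itself). -/
def socle : Submodule A A := sSup {S : Submodule A A | IsSimpleModule A ↥S}

/-- The commutator subspace `K(A)`. -/
def commutatorSubspace : Submodule K A :=
  Submodule.span K {x : A | ∃ a b : A, x = a * b - b * a}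

/-- `T_1(A) = { x ∈ A | x^p ∈ K(A) }`. -/
def T1Set (p : ℕ) : Set A := {x : A | x ^ p ∈ commutatorSubspace K A}

/-- The first generalized Reynolds ideal
`T_1(A)^⊥ = { y ∈ Z(A) | (x,y) = 0 for all x ∈ T_1(A) }`. -/
def T1Perp (p : ℕ) (B : A →ₗ[K] A →ₗ[K] K) : Set A :=
  {y : A | y ∈ Set.center A ∧ ∀ x ∈ T1Set K A p, B x y = 0}

section AssociativeForm

variable {R A : Type*} [CommSemiring R] [Semiring A] [Module R A] {B : A →ₗ[R] A →ₗ[R] R}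

theorem exists_mem_apply_one_ne_zero_of_ne_bot
    (hassoc : ∀ a b c : A, B (a * b) c = B a (b * c))
    (hsymm : ∀ a b : A, B a b = B b a)
    (hnd : ∀ a : A, (∀ b : A, B a b = 0) → a = 0)
    {I : Submodule A A} (hI : I ≠ ⊥) : ∃ x ∈ I, B x 1 ≠ 0 := by
  obtain ⟨s, hs, hs0⟩ := (Submodule.ne_bot_iff I).mp hI
  obtain ⟨b, hb⟩ : ∃ b, B s b ≠ 0 := by
    by_contra! h
    exact hs0 (hnd s h)
  refine ⟨b * s, I.smul_mem b hs, ?_⟩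
  rwa [hassoc, mul_one, hsymm]

end AssociativeForm

theorem one_not_mem_T1Perp_general {K A : Type*} [Field K]
    [Ring A] [Algebra K A]
    (p : ℕ)
    (B : A →ₗ[K] A →ₗ[K] K)
    (hassoc : ∀ a b c : A, B (a * b) c = B a (b * c))
    (hsymm : ∀ a b : A, B a b = B b a)
    (hnd : ∀ a : A, (∀ b : A, B a b = 0) → a = 0)
    (hsocne : socle A ≠ ⊥)
    (hsocT1 : ((socle A : Submodule A A) : Set A) ⊆ T1Set K A p) :
    (1 : A) ∉ T1Perp K A p B ∧ T1Perp K A p B ≠ Set.center A := by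
  have h1 : (1 : A) ∉ T1Perp K A p B := by
    rintro ⟨-, hperp⟩
    obtain ⟨x, hx, hx1⟩ := exists_mem_apply_one_ne_zero_of_ne_bot hassoc hsymm hnd hsocne
    exact hx1 (hperp x (hsocT1 hx))
  exact ⟨h1, fun h => h1 (h ▸ Set.one_mem_center)⟩

/-- let `A` be a finite dimensional symmetric algebra over an
algebraically closed field of characteristic `p > 0` with associative symmetric
nondegenerate bilinear form.  If `soc(A) ≠ 0` and `soc(A) ⊆ T_1(A)`, then
`1 ∉ T_1(A)^⊥`; in particular `T_1(A)^⊥` is a proper ideal of `Z(A)`. -/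
theorem one_not_mem_T1Perp {K A : Type*} [Field K] [IsAlgClosed K]
    [Ring A] [Algebra K A] [FiniteDimensional K A]
    (p : ℕ) [CharP K p] (hp : 0 < p)
    (B : A →ₗ[K] A →ₗ[K] K)
    (hassoc : ∀ a b c : A, B (a * b) c = B a (b * c))
    (hsymm : ∀ a b : A, B a b = B b a)
    (hnd : ∀ a : A, (∀ b : A, B a b = 0) → a = 0)
    (hsocne : socle A ≠ ⊥)
    (hsocT1 : ((socle A : Submodule A A) : Set A) ⊆ T1Set K A p) :
    (1 : A) ∉ T1Perp K A p B ∧ T1Perp K A p B ≠ Set.center A :=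
  one_not_mem_T1Perp_general p B hassoc hsymm hnd hsocne hsocT1
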